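/- For 0 < p ≤ 2, ℓ_p Lewis weights are monotone: if A' is obtained from A by appending an extra row, then for every row of A, its Lewis weight with respect to A' is at most its Lewis weight with respect to A. -/

import Mathlib

/-!
For `p ≤ 2` the map `T(v)ᵢ = (aᵢᵀ (Aᵀ V^{1-2/p} A)⁻¹ aᵢ)^{p/2}` is monotone in `v` (the exponent
`1 - 2/p` is nonpositive and matrix inversion is order-reversing) and homogeneous of degree
`1 - p/2 < 1`. Let `u` be the restriction of `w'` to the rows of `A`. Appending a row only enlarges
the Gram matrix, so `u ≤ T_A(u)`. With `t = maxᵢ uᵢ / wᵢ` this gives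
`u ≤ T_A(u) ≤ T_A(t w) = t^{1-p/2} w`, and at a maximising index `t ≤ t^{1-p/2}`, hence `t ≤ 1`.
-/

open Matrix

namespace Matrix

lemma mulVec_injective_of_rank_eq_card {m ι K : Type*} [Fintype ι] [Field K]
    {A : Matrix m ι K} (hA : A.rank = Fintype.card ι) : Function.Injective A.mulVec :=
  mulVec_injective_iff.mpr <| linearIndependent_iff_card_eq_finrank_span.mpr <| by
    rw [← hA, rank_eq_finrank_span_cols]; rfl

variable {m ι : Type*} [Fintype m] [Fintype ι]

section Gram

variable [DecidableEq m] (B : Matrix m ι ℝ)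

lemma dotProduct_transpose_mul_diagonal_mul_mulVec (c : m → ℝ) (x : ι → ℝ) :
    x ⬝ᵥ (Bᵀ * diagonal c * B) *ᵥ x = ∑ i, c i * (B *ᵥ x) i ^ 2 := by
  rw [← mulVec_mulVec, ← mulVec_mulVec, dotProduct_mulVec, vecMul_transpose]
  simp only [dotProduct, mulVec_diagonal]
  exact Finset.sum_congr rfl fun i _ => by ring

lemma dotProduct_transpose_mul_diagonal_mul_mulVec_mono {c c' : m → ℝ} (h : c ≤ c')
    (x : ι → ℝ) : x ⬝ᵥ (Bᵀ * diagonal c * B) *ᵥ x ≤ x ⬝ᵥ (Bᵀ * diagonal c' * B) *ᵥ x := by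
  simp only [dotProduct_transpose_mul_diagonal_mul_mulVec]
  exact Finset.sum_le_sum fun i _ => mul_le_mul_of_nonneg_right (h i) (sq_nonneg _)

variable {B}

lemma posDef_transpose_mul_diagonal_mul {c : m → ℝ} (hc : ∀ i, 0 < c i)
    (hB : Function.Injective B.mulVec) : (Bᵀ * diagonal c * B).PosDef := by
  simpa using (posDef_diagonal_iff.mpr hc).conjTranspose_mul_mul_same hB

end Gram

variable [DecidableEq ι]

-- Equality holds at `u = M⁻¹ x`; the gap is `(u - M⁻¹ x)ᵀ M (u - M⁻¹ x) ≥ 0`.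
lemma PosDef.two_mul_dotProduct_sub_le_dotProduct_inv_mulVec {M : Matrix ι ι ℝ}
    (hM : M.PosDef) (u x : ι → ℝ) : 2 * (u ⬝ᵥ x) - u ⬝ᵥ M *ᵥ u ≤ x ⬝ᵥ M⁻¹ *ᵥ x := by
  set v := M⁻¹ *ᵥ x
  have hMv : M *ᵥ v = x := by
    rw [mulVec_mulVec, mul_nonsing_inv _ hM.det_pos.ne'.isUnit, one_mulVec]
  have hvMu : v ⬝ᵥ M *ᵥ u = u ⬝ᵥ x := by
    rw [dotProduct_mulVec, ← mulVec_transpose, ← conjTranspose_eq_transpose_of_trivial,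
      hM.isHermitian.eq, hMv, dotProduct_comm]
  have hsq : 0 ≤ (u - v) ⬝ᵥ M *ᵥ (u - v) := by
    simpa using hM.posSemidef.dotProduct_mulVec_nonneg (u - v)
  rw [mulVec_sub, dotProduct_sub, sub_dotProduct, sub_dotProduct, hMv, hvMu] at hsq
  rw [dotProduct_comm x v]
  linarith

lemma PosDef.dotProduct_inv_mulVec_nonneg {M : Matrix ι ι ℝ} (hM : M.PosDef) (x : ι → ℝ) :
    0 ≤ x ⬝ᵥ M⁻¹ *ᵥ x := by
  simpa using hM.inv.posSemidef.dotProduct_mulVec_nonneg x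

lemma PosDef.dotProduct_inv_mulVec_antitone {M N : Matrix ι ι ℝ} (hM : M.PosDef)
    (hN : IsUnit N.det) (h : ∀ x, x ⬝ᵥ M *ᵥ x ≤ x ⬝ᵥ N *ᵥ x) (x : ι → ℝ) :
    x ⬝ᵥ N⁻¹ *ᵥ x ≤ x ⬝ᵥ M⁻¹ *ᵥ x := by
  set u := N⁻¹ *ᵥ x
  have hNu : N *ᵥ u = x := by rw [mulVec_mulVec, mul_nonsing_inv _ hN, one_mulVec]
  calc x ⬝ᵥ u = 2 * (u ⬝ᵥ x) - u ⬝ᵥ N *ᵥ u := by rw [hNu, dotProduct_comm]; ring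
    _ ≤ 2 * (u ⬝ᵥ x) - u ⬝ᵥ M *ᵥ u := by linarith [h u]
    _ ≤ x ⬝ᵥ M⁻¹ *ᵥ x := hM.two_mul_dotProduct_sub_le_dotProduct_inv_mulVec u x

end Matrix

section Lewis

variable {m ι : Type*} [Fintype m] [Fintype ι] [DecidableEq m] [DecidableEq ι]

/-- Positive fixed points of `lewisMap p A` are the `ℓ_p` Lewis weights of `A`. -/
noncomputable def lewisMap (p : ℝ) (A : Matrix m ι ℝ) (v : m → ℝ) (i : m) : ℝ :=
  (A i ⬝ᵥ (Aᵀ * diagonal (fun j => v j ^ (1 - 2 / p)) * A)⁻¹ *ᵥ A i) ^ (p / 2)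

variable {p : ℝ}

lemma lewisMap_mono (hp : 0 < p) (hp2 : p ≤ 2) {A : Matrix m ι ℝ}
    (hA : Function.Injective A.mulVec) {v v' : m → ℝ} (hv : ∀ j, 0 < v j) (hvv' : v ≤ v') (i : m) :
    lewisMap p A v i ≤ lewisMap p A v' i := by
  have hexp : 1 - 2 / p ≤ 0 := by rw [sub_nonpos, le_div_iff₀ hp]; linarith
  have hM := posDef_transpose_mul_diagonal_mul
    (fun j => Real.rpow_pos_of_pos (hv j) (1 - 2 / p)) hA
  have hM' := posDef_transpose_mul_diagonal_mul
    (fun j => Real.rpow_pos_of_pos ((hv j).trans_le (hvv' j)) (1 - 2 / p)) hA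
  have hgram := dotProduct_transpose_mul_diagonal_mul_mulVec_mono A
    (fun j => Real.rpow_le_rpow_of_nonpos (hv j) (hvv' j) hexp)
  exact Real.rpow_le_rpow (hM.dotProduct_inv_mulVec_nonneg _)
    (hM'.dotProduct_inv_mulVec_antitone hM.det_pos.ne'.isUnit hgram _) (by positivity)

lemma lewisMap_smul (hp : p ≠ 0) {A : Matrix m ι ℝ} (hA : Function.Injective A.mulVec)
    {v : m → ℝ} (hv : ∀ j, 0 < v j) {t : ℝ} (ht : 0 < t) (i : m) :
    lewisMap p A (t • v) i = t ^ (1 - p / 2) * lewisMap p A v i := by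
  set M := Aᵀ * diagonal (fun j => v j ^ (1 - 2 / p)) * A
  have hM : M.PosDef :=
    posDef_transpose_mul_diagonal_mul (fun j => Real.rpow_pos_of_pos (hv j) (1 - 2 / p)) hA
  have hs : 0 < t ^ (1 - 2 / p) := Real.rpow_pos_of_pos ht _
  have hgram :
      Aᵀ * diagonal (fun j => (t • v) j ^ (1 - 2 / p)) * A = t ^ (1 - 2 / p) • M := by
    have hdiag : (fun j => (t • v) j ^ (1 - 2 / p))
        = t ^ (1 - 2 / p) • fun j => v j ^ (1 - 2 / p) :=
      funext fun j => Real.mul_rpow ht.le (hv j).le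
    rw [hdiag, diagonal_smul, Matrix.mul_smul, Matrix.smul_mul]
  have hinv : (t ^ (1 - 2 / p) • M)⁻¹ = (t ^ (1 - 2 / p))⁻¹ • M⁻¹ := by
    refine inv_eq_left_inv ?_
    rw [smul_mul_smul_comm, inv_mul_cancel₀ hs.ne', one_smul,
      nonsing_inv_mul _ hM.det_pos.ne'.isUnit]
  have hexp : (t ^ (1 - 2 / p))⁻¹ ^ (p / 2) = t ^ (1 - p / 2) := by
    rw [Real.inv_rpow hs.le, ← Real.rpow_mul ht.le, ← Real.rpow_neg ht.le]
    congr 1; field_simp; ring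
  simp only [lewisMap]
  rw [hgram, hinv, smul_mulVec, dotProduct_smul, smul_eq_mul,
    Real.mul_rpow (inv_nonneg.mpr hs.le) (hM.dotProduct_inv_mulVec_nonneg _), hexp]

lemma lewisMap_castSucc_le {n : ℕ} (hp : 0 ≤ p) {A : Matrix (Fin n) ι ℝ}
    {A' : Matrix (Fin (n + 1)) ι ℝ} (hrows : ∀ i, A' i.castSucc = A i)
    (hA : Function.Injective A.mulVec) {w' : Fin (n + 1) → ℝ} (hw' : ∀ j, 0 < w' j)
    (i : Fin n) :
    lewisMap p A' w' i.castSucc ≤ lewisMap p A (fun j => w' j.castSucc) i := by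
  have hmulVec (x : ι → ℝ) (j : Fin n) : (A' *ᵥ x) j.castSucc = (A *ᵥ x) j :=
    congrArg (· ⬝ᵥ x) (hrows j)
  have hA' : Function.Injective A'.mulVec := fun x y hxy =>
    hA <| funext fun j => by rw [← hmulVec, ← hmulVec, hxy]
  have hM := posDef_transpose_mul_diagonal_mul
    (fun j => Real.rpow_pos_of_pos (hw' j.castSucc) (1 - 2 / p)) hA
  have hM' := posDef_transpose_mul_diagonal_mul
    (fun j => Real.rpow_pos_of_pos (hw' j) (1 - 2 / p)) hA'
  have hgram (x : ι → ℝ) :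
      x ⬝ᵥ (Aᵀ * diagonal (fun j : Fin n => w' j.castSucc ^ (1 - 2 / p)) * A) *ᵥ x
        ≤ x ⬝ᵥ (A'ᵀ * diagonal (fun j => w' j ^ (1 - 2 / p)) * A') *ᵥ x := by
    simp only [dotProduct_transpose_mul_diagonal_mul_mulVec, Fin.sum_univ_castSucc, hmulVec]
    exact le_add_of_nonneg_right <|
      mul_nonneg (Real.rpow_pos_of_pos (hw' _) _).le (sq_nonneg _)
  unfold lewisMap
  rw [hrows]
  exact Real.rpow_le_rpow (hM'.dotProduct_inv_mulVec_nonneg _)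
    (hM.dotProduct_inv_mulVec_antitone hM'.det_pos.ne'.isUnit hgram _) (by positivity)

end Lewis

lemma le_of_forall_le_mul_imp_le_rpow_mul {ι : Type*} [Finite ι] {u w : ι → ℝ} {q : ℝ}
    (hq : 0 < q) (hu : ∀ i, 0 < u i) (hw : ∀ i, 0 < w i)
    (h : ∀ t, 0 < t → (∀ j, u j ≤ t * w j) → ∀ j, u j ≤ t ^ (1 - q) * w j) (i : ι) :
    u i ≤ w i := by
  have : Nonempty ι := ⟨i⟩
  obtain ⟨k, hk⟩ := Finite.exists_max fun j => u j / w j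
  set t := u k / w k
  have ht : 0 < t := div_pos (hu k) (hw k)
  have hle (j : ι) : u j ≤ t * w j := (div_le_iff₀ (hw j)).mp (hk j)
  have htq : t ≤ t ^ (1 - q) := (div_le_iff₀ (hw k)).mpr (h t ht hle k)
  have ht1 : t ≤ 1 := by
    by_contra! ht1
    have := Real.rpow_lt_rpow_of_exponent_lt ht1 (show 1 - q < 1 by linarith)
    rw [Real.rpow_one] at this
    linarith
  calc u i ≤ t * w i := hle i
    _ ≤ w i := mul_le_of_le_one_left (hw i).le ht1

theorem stmt12 {n d : ℕ} (A : Matrix (Fin n) (Fin d) ℝ) (A' : Matrix (Fin (n + 1)) (Fin d) ℝ)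
    (hA : A.rank = d) (hrows : ∀ i : Fin n, A' i.castSucc = A i)
    (p : ℝ) (hp : 0 < p) (hp2 : p ≤ 2)
    (w : Fin n → ℝ) (w' : Fin (n + 1) → ℝ)
    (hw : ∀ i, 0 < w i) (hw' : ∀ i, 0 < w' i)
    (hlewis : ∀ i,
      (A i ⬝ᵥ (Aᵀ * Matrix.diagonal (fun j => w j ^ (1 - 2 / p)) * A)⁻¹.mulVec (A i)) ^ (p / 2)
        = w i)
    (hlewis' : ∀ i,
      (A' i ⬝ᵥ (A'ᵀ * Matrix.diagonal (fun j => w' j ^ (1 - 2 / p)) * A')⁻¹.mulVec (A' i)) ^ (p / 2)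
        = w' i) :
    ∀ i : Fin n, w' i.castSucc ≤ w i := by
  have hAinj : Function.Injective A.mulVec :=
    mulVec_injective_of_rank_eq_card (by rw [hA, Fintype.card_fin])
  refine le_of_forall_le_mul_imp_le_rpow_mul (u := fun j => w' j.castSucc) (half_pos hp)
    (fun j => hw' _) hw fun t ht hle j => ?_
  calc w' j.castSucc = lewisMap p A' w' j.castSucc := (hlewis' _).symm
    _ ≤ lewisMap p A (fun k => w' k.castSucc) j := lewisMap_castSucc_le hp.le hrows hAinj hw' j
    _ ≤ lewisMap p A (t • w) j := lewisMap_mono hp hp2 hAinj (fun k => hw' _) hle j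
    _ = t ^ (1 - p / 2) * w j := by rw [lewisMap_smul hp.ne' hAinj hw ht, lewisMap, hlewis]
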